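/- arXiv:1712.05619 — 2 statements merged into one kernel-verified Lean document; each statement's English description precedes it below -/
import Mathlib

section
/- Let D be a double Gerstenhaber algebra of degree d with double bracket {{-,-}} of degree d. Then the associated bracket {α,β} = {{α,β}}'·{{α,β}}'' (multiplication of the two Sweedler components) satisfies the graded Loday–Leibniz identity: for homogeneous α, β, γ, {α,{{β,γ}}} = {{{α,β},γ}} + (-1)^{(|α|+d)(|β|+d)} {{β,{α,γ}}}, where {α,-} acts on a tensor x⊗y by {α,x⊗y} = {α,x}⊗y + (-1)^{(|α|+d)|x|} x⊗{α,y}. -/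
/-!
Write `m₁₂`, `m₂₃ : D ⊗ D ⊗ D → D ⊗ D` for multiplication of the first two and of the last two
factors. On homogeneous tensors, `{α, -} = m₁₂ ∘ {{α, -}}_L + m₂₃ ∘ σ_(123) ∘ {{α, -}}_L ∘ σ_(12)`;
the Leibniz rule gives `{{β, m(-)}} = m₁₂ ∘ σ_(123) ∘ {{β, -}}_L ∘ σ_(12) + m₂₃ ∘ {{β, -}}_L`, and
together with antisymmetry and `σ_(12) ∘ m₁₂ = m₂₃ ∘ σ_(123)`, `σ_(12) ∘ m₂₃ = m₁₂ ∘ σ_(132)` the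
analogous formula for `{{m(-), γ}}`. Applying `m₁₂` to the Jacobi identity for `(α, β, γ)` and
`m₂₃` to the one for `(β, α, γ)`, each rewritten by antisymmetry, matches the two halves of
`{α, {{β, γ}}}` with the corresponding halves of the right-hand side.
-/

open TensorProduct

variable (k : Type*) [Field k] [CharZero k]
  (D : Type*) [Ring D] [Algebra k D]
  (𝒜 : ℤ → Submodule k D) [GradedAlgebra 𝒜] (d : ℤ)

/-- `{{α, x ⊗ y}}_L = {{α,x}} ⊗ y`, reassociated into `D ⊗ (D ⊗ D)`. -/
noncomputable def brL (bb : D →ₗ[k] D →ₗ[k] D ⊗[k] D) (α : D) :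
    D ⊗[k] D →ₗ[k] D ⊗[k] (D ⊗[k] D) :=
  (TensorProduct.assoc k D D D).toLinearMap ∘ₗ LinearMap.rTensor D (bb α)

section Signs

variable {R : Type*} [Ring R]

theorem neg_one_pow_natAbs_add (a b : ℤ) :
    (-1 : R) ^ (a + b).natAbs = (-1) ^ a.natAbs * (-1) ^ b.natAbs := by
  simp only [← Int.coe_negOnePow, Int.negOnePow_add, Units.val_mul, Int.cast_mul]

theorem neg_one_pow_natAbs_eq_of_even_sub {a b : ℤ} (h : Even (a - b)) :
    (-1 : R) ^ a.natAbs = (-1) ^ b.natAbs := by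
  rw [← Int.coe_negOnePow, ← Int.coe_negOnePow, (Int.negOnePow_eq_iff a b).2 h]

theorem neg_one_pow_natAbs_mul_self (a : ℤ) : (-1 : R) ^ a.natAbs * (-1) ^ a.natAbs = 1 := by
  rw [← pow_add, ← two_mul, pow_mul, neg_one_sq, one_pow]

end Signs

section TensorMultiplication

variable (R A : Type*) [CommRing R] [Ring A] [Algebra R A]

noncomputable def mul12 : A ⊗[R] (A ⊗[R] A) →ₗ[R] A ⊗[R] A :=
  (LinearMap.mul' R A).rTensor A ∘ₗ (TensorProduct.assoc R A A A).symm.toLinearMap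

noncomputable def mul23 : A ⊗[R] (A ⊗[R] A) →ₗ[R] A ⊗[R] A :=
  (LinearMap.mul' R A).lTensor A

variable {R A}

@[simp]
theorem mul12_tmul_tmul (x y z : A) : mul12 R A (x ⊗ₜ (y ⊗ₜ z)) = (x * y) ⊗ₜ z := by
  simp [mul12]

@[simp]
theorem mul23_tmul_tmul (x y z : A) : mul23 R A (x ⊗ₜ (y ⊗ₜ z)) = x ⊗ₜ (y * z) := by
  simp [mul23]

theorem mul12_tmul (x : A) (w : A ⊗[R] A) :
    mul12 R A (x ⊗ₜ w) = (LinearMap.mulLeft R x).rTensor A w := by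
  induction w using TensorProduct.induction_on with
  | zero => simp
  | tmul y z => simp
  | add v w hv hw => simp only [tmul_add, map_add, hv, hw]

theorem mul23_tmul (x : A) (w : A ⊗[R] A) :
    mul23 R A (x ⊗ₜ w) = x ⊗ₜ LinearMap.mul' R A w := by
  simp [mul23]

theorem mul12_assoc_tmul (w : A ⊗[R] A) (y : A) :
    mul12 R A (TensorProduct.assoc R A A A (w ⊗ₜ y)) = LinearMap.mul' R A w ⊗ₜ y := by
  simp [mul12]

theorem mul23_assoc_tmul (w : A ⊗[R] A) (y : A) :
    mul23 R A (TensorProduct.assoc R A A A (w ⊗ₜ y)) = (LinearMap.mulRight R y).lTensor A w := by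
  induction w using TensorProduct.induction_on with
  | zero => simp
  | tmul x z => simp
  | add v w hv hw => simp only [add_tmul, map_add, hv, hw]

end TensorMultiplication

section Graded

variable {R A : Type*} [CommRing R] [Ring A] [Algebra R A] (𝒜 : ℤ → Submodule R A)

def tensorGrade (n : ℤ) : Submodule R (A ⊗[R] A) :=
  Submodule.span R {w | ∃ p q : ℤ, p + q = n ∧ ∃ u ∈ 𝒜 p, ∃ v ∈ 𝒜 q, w = u ⊗ₜ[R] v}

def IsGradedFlip (σ : A ⊗[R] A →ₗ[R] A ⊗[R] A) : Prop :=
  ∀ (i j : ℤ) (x y : A), x ∈ 𝒜 i → y ∈ 𝒜 j →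
    σ (x ⊗ₜ[R] y) = ((-1 : R) ^ (i * j).natAbs) • (y ⊗ₜ[R] x)

def IsGradedCyclicShift (τ : A ⊗[R] (A ⊗[R] A) →ₗ[R] A ⊗[R] (A ⊗[R] A)) : Prop :=
  ∀ (i j l : ℤ) (x y z : A), x ∈ 𝒜 i → y ∈ 𝒜 j → z ∈ 𝒜 l →
    τ (x ⊗ₜ[R] (y ⊗ₜ[R] z)) = ((-1 : R) ^ ((i + j) * l).natAbs) • (z ⊗ₜ[R] (x ⊗ₜ[R] y))

variable {𝒜}

theorem mul'_mem_of_mem_tensorGrade [SetLike.GradedMonoid 𝒜] {n : ℤ} {t : A ⊗[R] A}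
    (ht : t ∈ tensorGrade 𝒜 n) : LinearMap.mul' R A t ∈ 𝒜 n := by
  suffices tensorGrade 𝒜 n ≤ (𝒜 n).comap (LinearMap.mul' R A) from this ht
  refine Submodule.span_le.2 ?_
  rintro _ ⟨p, q, rfl, u, hu, v, hv, rfl⟩
  simpa using SetLike.mul_mem_graded hu hv

theorem IsGradedCyclicShift.apply_assoc_tmul {τ : A ⊗[R] (A ⊗[R] A) →ₗ[R] A ⊗[R] (A ⊗[R] A)}
    (hτ : IsGradedCyclicShift 𝒜 τ) {n l : ℤ} {w : A ⊗[R] A} (hw : w ∈ tensorGrade 𝒜 n)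
    {z : A} (hz : z ∈ 𝒜 l) :
    τ (TensorProduct.assoc R A A A (w ⊗ₜ z)) = ((-1 : R) ^ (n * l).natAbs) • (z ⊗ₜ w) := by
  induction hw using Submodule.span_induction with
  | mem _ h =>
    obtain ⟨p, q, rfl, x, hx, y, hy, rfl⟩ := h
    simpa using hτ p q l x y z hx hy hz
  | zero => simp
  | add v w _ _ hv hw => simp only [add_tmul, tmul_add, map_add, hv, hw, smul_add]
  | smul c w _ hw => rw [← smul_tmul', map_smul, map_smul, hw, tmul_smul, smul_comm]

variable (𝒜) [DirectSum.Decomposition 𝒜] {M : Type*} [AddCommMonoid M] [Module R M]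

theorem tensor_ext_of_homogeneous {F G : A ⊗[R] A →ₗ[R] M}
    (h : ∀ (i j : ℤ) (x y : A), x ∈ 𝒜 i → y ∈ 𝒜 j → F (x ⊗ₜ y) = G (x ⊗ₜ y)) : F = G :=
  TensorProduct.ext <| DirectSum.decompose_lhom_ext 𝒜 fun i => LinearMap.ext fun x =>
    DirectSum.decompose_lhom_ext 𝒜 fun j => LinearMap.ext fun y => h i j x y x.2 y.2

theorem tensor_ext_of_homogeneous₃ {F G : A ⊗[R] (A ⊗[R] A) →ₗ[R] M}
    (h : ∀ (i j l : ℤ) (x y z : A), x ∈ 𝒜 i → y ∈ 𝒜 j → z ∈ 𝒜 l →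
      F (x ⊗ₜ (y ⊗ₜ z)) = G (x ⊗ₜ (y ⊗ₜ z))) : F = G :=
  TensorProduct.ext <| DirectSum.decompose_lhom_ext 𝒜 fun i => LinearMap.ext fun x =>
    tensor_ext_of_homogeneous 𝒜 fun j l y z hy hz => h i j l x y z x.2 hy hz

variable {𝒜}

theorem IsGradedFlip.comp_mul12 [SetLike.GradedMonoid 𝒜] {σ : A ⊗[R] A →ₗ[R] A ⊗[R] A}
    {τ : A ⊗[R] (A ⊗[R] A) →ₗ[R] A ⊗[R] (A ⊗[R] A)} (hσ : IsGradedFlip 𝒜 σ)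
    (hτ : IsGradedCyclicShift 𝒜 τ) : σ ∘ₗ mul12 R A = mul23 R A ∘ₗ τ := by
  refine tensor_ext_of_homogeneous₃ 𝒜 fun i j l x y z hx hy hz => ?_
  simp [hσ _ _ _ _ (SetLike.mul_mem_graded hx hy) hz, hτ i j l x y z hx hy hz]

theorem IsGradedFlip.comp_mul23 [SetLike.GradedMonoid 𝒜] {σ : A ⊗[R] A →ₗ[R] A ⊗[R] A}
    {τ : A ⊗[R] (A ⊗[R] A) →ₗ[R] A ⊗[R] (A ⊗[R] A)} (hσ : IsGradedFlip 𝒜 σ)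
    (hτ : IsGradedCyclicShift 𝒜 τ) : σ ∘ₗ mul23 R A = mul12 R A ∘ₗ τ ∘ₗ τ := by
  refine tensor_ext_of_homogeneous₃ 𝒜 fun i j l x y z hx hy hz => ?_
  have hsign : (-1 : R) ^ (i * (j + l)).natAbs =
      (-1) ^ ((i + j) * l).natAbs * (-1) ^ ((l + i) * j).natAbs := by
    rw [← neg_one_pow_natAbs_add]
    exact neg_one_pow_natAbs_eq_of_even_sub ⟨-(j * l), by ring⟩
  simp [hσ _ _ _ _ hx (SetLike.mul_mem_graded hy hz), hτ i j l x y z hx hy hz,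
    hτ l i j z x y hz hx hy, smul_smul, hsign]

end Graded

section DoubleBracket

variable {K A : Type*} [Field K] [Ring A] [Algebra K A] (𝒜 : ℤ → Submodule K A) (d : ℤ)

def DoubleBracketHasDegree (bb : A →ₗ[K] A →ₗ[K] A ⊗[K] A) : Prop :=
  ∀ (i j : ℤ) (x y : A), x ∈ 𝒜 i → y ∈ 𝒜 j → bb x y ∈ tensorGrade 𝒜 (i + j + d)

def DoubleBracketLeibniz (bb : A →ₗ[K] A →ₗ[K] A ⊗[K] A) : Prop :=
  ∀ (i j : ℤ) (α β : A), α ∈ 𝒜 i → β ∈ 𝒜 j → ∀ γ : A,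
    bb α (β * γ) =
      ((-1 : K) ^ ((i + d) * j).natAbs) • LinearMap.rTensor A (LinearMap.mulLeft K β) (bb α γ)
        + LinearMap.lTensor A (LinearMap.mulRight K γ) (bb α β)

def DoubleBracketAntisymm (σ : A ⊗[K] A →ₗ[K] A ⊗[K] A) (bb : A →ₗ[K] A →ₗ[K] A ⊗[K] A) :
    Prop :=
  ∀ (i j : ℤ) (α β : A), α ∈ 𝒜 i → β ∈ 𝒜 j →
    bb α β = - ((-1 : K) ^ ((i + d) * (j + d)).natAbs) • σ (bb β α)

def DoubleBracketJacobi (τ : A ⊗[K] (A ⊗[K] A) →ₗ[K] A ⊗[K] (A ⊗[K] A))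
    (bb : A →ₗ[K] A →ₗ[K] A ⊗[K] A) : Prop :=
  ∀ (i j l : ℤ) (α β γ : A), α ∈ 𝒜 i → β ∈ 𝒜 j → γ ∈ 𝒜 l →
    brL K A bb α (bb β γ)
      + ((-1 : K) ^ ((i + d) * (j + l)).natAbs) • τ (brL K A bb β (bb γ α))
      + ((-1 : K) ^ ((l + d) * (i + j)).natAbs) • τ (τ (brL K A bb γ (bb α β))) = 0

variable {𝒜 d} {bb : A →ₗ[K] A →ₗ[K] A ⊗[K] A} {σ : A ⊗[K] A →ₗ[K] A ⊗[K] A}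
  {τ : A ⊗[K] (A ⊗[K] A) →ₗ[K] A ⊗[K] (A ⊗[K] A)}

@[simp]
theorem brL_tmul (α x y : A) :
    brL K A bb α (x ⊗ₜ y) = TensorProduct.assoc K A A A (bb α x ⊗ₜ y) := rfl

theorem eq_mul12_brL_add_mul23_of_tmul [DirectSum.Decomposition 𝒜] (hσ : IsGradedFlip 𝒜 σ)
    (hτ : IsGradedCyclicShift 𝒜 τ) (hdeg : DoubleBracketHasDegree 𝒜 d bb) {p : ℤ} {α : A}
    (hα : α ∈ 𝒜 p) {act : A ⊗[K] A →ₗ[K] A ⊗[K] A}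
    (hact : ∀ (i : ℤ) (x y : A), x ∈ 𝒜 i →
      act (x ⊗ₜ[K] y) = LinearMap.mul' K A (bb α x) ⊗ₜ[K] y
        + ((-1 : K) ^ ((p + d) * i).natAbs) • (x ⊗ₜ[K] LinearMap.mul' K A (bb α y))) :
    act = mul12 K A ∘ₗ brL K A bb α + mul23 K A ∘ₗ τ ∘ₗ brL K A bb α ∘ₗ σ := by
  refine tensor_ext_of_homogeneous 𝒜 fun i j x y hx hy => ?_
  have hsign : (-1 : K) ^ (i * j).natAbs * (-1) ^ ((p + j + d) * i).natAbs =
      (-1) ^ ((p + d) * i).natAbs := by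
    rw [← neg_one_pow_natAbs_add]
    exact neg_one_pow_natAbs_eq_of_even_sub ⟨i * j, by ring⟩
  simp [hact i x y hx, hσ i j x y hx hy, mul12_assoc_tmul,
    hτ.apply_assoc_tmul (hdeg p j α y hα hy) hx, mul23_tmul, smul_smul, hsign]

theorem bb_comp_mul' [DirectSum.Decomposition 𝒜] (hσ : IsGradedFlip 𝒜 σ)
    (hτ : IsGradedCyclicShift 𝒜 τ) (hdeg : DoubleBracketHasDegree 𝒜 d bb)
    (hleib : DoubleBracketLeibniz 𝒜 d bb) {q : ℤ} {β : A} (hβ : β ∈ 𝒜 q) :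
    bb β ∘ₗ LinearMap.mul' K A =
      mul12 K A ∘ₗ τ ∘ₗ brL K A bb β ∘ₗ σ + mul23 K A ∘ₗ brL K A bb β := by
  refine tensor_ext_of_homogeneous 𝒜 fun a b u v hu hv => ?_
  have hsign : (-1 : K) ^ (a * b).natAbs * (-1) ^ ((q + b + d) * a).natAbs =
      (-1) ^ ((q + d) * a).natAbs := by
    rw [← neg_one_pow_natAbs_add]
    exact neg_one_pow_natAbs_eq_of_even_sub ⟨a * b, by ring⟩
  simp [hleib q a β u hβ hu v, hσ a b u v hu hv, hτ.apply_assoc_tmul (hdeg q b β v hβ hv) hu,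
    mul12_tmul, mul23_assoc_tmul, smul_smul, hsign]

theorem bb_mul'_left [GradedRing 𝒜] (hσ : IsGradedFlip 𝒜 σ) (hτ : IsGradedCyclicShift 𝒜 τ)
    (hdeg : DoubleBracketHasDegree 𝒜 d bb) (hleib : DoubleBracketLeibniz 𝒜 d bb)
    (hskew : DoubleBracketAntisymm 𝒜 d σ bb) {n r : ℤ} {t : A ⊗[K] A}
    (ht : t ∈ tensorGrade 𝒜 (n + d)) {γ : A} (hγ : γ ∈ 𝒜 r) :
    bb (LinearMap.mul' K A t) γ = -(-1 : K) ^ ((r + d) * n).natAbs •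
      (mul12 K A (τ (τ (brL K A bb γ t))) + mul23 K A (τ (τ (brL K A bb γ (σ t))))) := by
  have hsign : (-1 : K) ^ ((n + d + d) * (r + d)).natAbs = (-1) ^ ((r + d) * n).natAbs :=
    neg_one_pow_natAbs_eq_of_even_sub ⟨d * (r + d), by ring⟩
  rw [hskew (n + d) r _ γ (mul'_mem_of_mem_tensorGrade ht) hγ, hsign,
    ← LinearMap.comp_apply (bb γ), bb_comp_mul' hσ hτ hdeg hleib hγ]
  simp only [LinearMap.add_apply, LinearMap.comp_apply, map_add]
  rw [← LinearMap.comp_apply σ (mul12 K A), hσ.comp_mul12 hτ,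
    ← LinearMap.comp_apply σ (mul23 K A), hσ.comp_mul23 hτ]
  simp only [LinearMap.comp_apply]
  module

theorem brL_bb_eq_of_jacobi (hskew : DoubleBracketAntisymm 𝒜 d σ bb)
    (hjac : DoubleBracketJacobi 𝒜 d τ bb) {p q r : ℤ} {α β γ : A}
    (hα : α ∈ 𝒜 p) (hβ : β ∈ 𝒜 q) (hγ : γ ∈ 𝒜 r) :
    brL K A bb α (bb β γ) =
      (-1 : K) ^ ((p + d) * (q + d)).natAbs • τ (brL K A bb β (σ (bb α γ)))
        - (-1 : K) ^ ((r + d) * (p + q)).natAbs • τ (τ (brL K A bb γ (bb α β))) := by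
  have h := hjac p q r α β γ hα hβ hγ
  have hsign : (-1 : K) ^ ((p + d) * (q + r)).natAbs * (-1) ^ ((r + d) * (p + d)).natAbs =
      (-1) ^ ((p + d) * (q + d)).natAbs := by
    rw [← neg_one_pow_natAbs_add]
    exact neg_one_pow_natAbs_eq_of_even_sub ⟨(p + d) * r, by ring⟩
  rw [hskew r p γ α hγ hα] at h
  simp only [map_neg, map_smul, smul_neg, neg_smul, smul_smul, hsign] at h
  linear_combination (norm := module) h

theorem cyc_brL_flip_bb_eq_of_jacobi (hskew : DoubleBracketAntisymm 𝒜 d σ bb)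
    (hjac : DoubleBracketJacobi 𝒜 d τ bb) {p q r : ℤ} {α β γ : A}
    (hα : α ∈ 𝒜 p) (hβ : β ∈ 𝒜 q) (hγ : γ ∈ 𝒜 r) :
    τ (brL K A bb α (σ (bb β γ))) =
      (-1 : K) ^ ((p + d) * (q + d)).natAbs • brL K A bb β (bb α γ)
        - (-1 : K) ^ ((r + d) * (p + q)).natAbs • τ (τ (brL K A bb γ (σ (bb α β)))) := by
  have hsquare := neg_one_pow_natAbs_mul_self (R := K) ((p + d) * (q + d))
  rw [brL_bb_eq_of_jacobi hskew hjac hβ hα hγ, hskew q p β α hβ hα, mul_comm (q + d), add_comm q p]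
  simp only [map_smul]
  match_scalars
  · linear_combination -hsquare
  · linear_combination -(-1 : K) ^ ((r + d) * (p + q)).natAbs * hsquare

end DoubleBracket

/-- in a double Gerstenhaber algebra of degree `d`, the
associated bracket `{α,β} = m({{α,β}})` satisfies the graded Loday–Leibniz
identity. -/
theorem double_gerstenhaber_assoc_bracket_loday
    (bb : D →ₗ[k] D →ₗ[k] D ⊗[k] D)
    -- `σ_(12)`, the graded flip of `D ⊗ D`
    (σ : D ⊗[k] D →ₗ[k] D ⊗[k] D)
    (hσ : ∀ (i j : ℤ) (x y : D), x ∈ 𝒜 i → y ∈ 𝒜 j →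
      σ (x ⊗ₜ[k] y) = ((-1 : k) ^ (i * j).natAbs) • (y ⊗ₜ[k] x))
    -- `σ_(123)`, the graded cyclic permutation of `D ⊗ D ⊗ D`
    (cyc3 : D ⊗[k] (D ⊗[k] D) →ₗ[k] D ⊗[k] (D ⊗[k] D))
    (hcyc3 : ∀ (i j l : ℤ) (x y z : D), x ∈ 𝒜 i → y ∈ 𝒜 j → z ∈ 𝒜 l →
      cyc3 (x ⊗ₜ[k] (y ⊗ₜ[k] z)) =
        ((-1 : k) ^ ((i + j) * l).natAbs) • (z ⊗ₜ[k] (x ⊗ₜ[k] y)))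
    -- `{{-,-}}` has degree `d`
    (hdeg : ∀ (i j : ℤ) (x y : D), x ∈ 𝒜 i → y ∈ 𝒜 j →
      bb x y ∈ Submodule.span k {w : D ⊗[k] D | ∃ p q : ℤ, p + q = i + j + d ∧
        ∃ u ∈ 𝒜 p, ∃ v ∈ 𝒜 q, w = u ⊗ₜ[k] v})
    -- graded Leibniz rule in the second argument for the outer structure
    (hleib : ∀ (i j : ℤ) (α β : D), α ∈ 𝒜 i → β ∈ 𝒜 j → ∀ γ : D,
      bb α (β * γ) =
        ((-1 : k) ^ ((i + d) * j).natAbs) •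
            LinearMap.rTensor D (LinearMap.mulLeft k β) (bb α γ)
          + LinearMap.lTensor D (LinearMap.mulRight k γ) (bb α β))
    -- graded antisymmetry
    (hskew : ∀ (i j : ℤ) (α β : D), α ∈ 𝒜 i → β ∈ 𝒜 j →
      bb α β = - ((-1 : k) ^ ((i + d) * (j + d)).natAbs) • σ (bb β α))
    -- graded double Jacobi identity
    (hjac : ∀ (i j l : ℤ) (α β γ : D), α ∈ 𝒜 i → β ∈ 𝒜 j → γ ∈ 𝒜 l →
      brL k D bb α (bb β γ)
        + ((-1 : k) ^ ((i + d) * (j + l)).natAbs) • cyc3 (brL k D bb β (bb γ α))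
        + ((-1 : k) ^ ((l + d) * (i + j)).natAbs) •
            cyc3 (cyc3 (brL k D bb γ (bb α β))) = 0) :
    ∀ (p q r : ℤ) (α β γ : D), α ∈ 𝒜 p → β ∈ 𝒜 q → γ ∈ 𝒜 r →
    ∀ act : D ⊗[k] D →ₗ[k] D ⊗[k] D,
      (∀ (i : ℤ) (x y : D), x ∈ 𝒜 i →
        act (x ⊗ₜ[k] y) = (LinearMap.mul' k D (bb α x)) ⊗ₜ[k] y
          + ((-1 : k) ^ ((p + d) * i).natAbs) •
              (x ⊗ₜ[k] LinearMap.mul' k D (bb α y))) →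
      act (bb β γ) = bb (LinearMap.mul' k D (bb α β)) γ
        + ((-1 : k) ^ ((p + d) * (q + d)).natAbs) •
            bb β (LinearMap.mul' k D (bb α γ)) := by
  intro p q r α β γ hα hβ hγ act hact
  calc act (bb β γ)
      = mul12 k D (brL k D bb α (bb β γ)) + mul23 k D (cyc3 (brL k D bb α (σ (bb β γ)))) := by
        rw [eq_mul12_brL_add_mul23_of_tmul hσ hcyc3 hdeg hα hact]
        rfl
    _ = -(-1 : k) ^ ((r + d) * (p + q)).natAbs •
          (mul12 k D (cyc3 (cyc3 (brL k D bb γ (bb α β))))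
            + mul23 k D (cyc3 (cyc3 (brL k D bb γ (σ (bb α β))))))
        + (-1 : k) ^ ((p + d) * (q + d)).natAbs •
          (mul12 k D (cyc3 (brL k D bb β (σ (bb α γ)))) + mul23 k D (brL k D bb β (bb α γ))) := by
        rw [brL_bb_eq_of_jacobi hskew hjac hα hβ hγ,
          cyc_brL_flip_bb_eq_of_jacobi hskew hjac hα hβ hγ]
        simp only [map_sub, map_smul]
        module
    _ = bb (LinearMap.mul' k D (bb α β)) γ
        + ((-1 : k) ^ ((p + d) * (q + d)).natAbs) • bb β (LinearMap.mul' k D (bb α γ)) := by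
        rw [bb_mul'_left hσ hcyc3 hdeg hleib hskew (hdeg p q α β hα hβ) hγ,
          ← LinearMap.comp_apply (bb β), bb_comp_mul' hσ hcyc3 hdeg hleib hβ]
        rfl
end

section
/- Let D be a double Gerstenhaber algebra of degree d. Then for homogeneous α, β, γ ∈ D we have {αβ, γ} - (-1)^{|α||β|}{βα, γ} = 0, where {x,y} = m({{x,y}}); that is, the associated bracket vanishes on graded commutators in its first argument. -/
open TensorProduct

set_option maxRecDepth 8000

lemma dg7_sign_cast (k : Type*) [Field k] (n : ℤ) :
    ((-1 : k) ^ n.natAbs) = (-1 : k) ^ n := by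
  rcases Int.even_or_odd n with h | h
  · rw [(Int.natAbs_even.mpr h).neg_one_pow, h.neg_one_zpow]
  · rw [(Int.natAbs_odd.mpr h).neg_one_pow, h.neg_one_zpow]

lemma dg7_sign_mul (k : Type*) [Field k] (m n : ℤ) :
    ((-1 : k) ^ m.natAbs) * ((-1 : k) ^ n.natAbs) = (-1 : k) ^ (m + n).natAbs := by
  rw [dg7_sign_cast, dg7_sign_cast, dg7_sign_cast, ← zpow_add₀ (by norm_num : (-1 : k) ≠ 0)]

lemma dg7_sign_congr (k : Type*) [Field k] (m n : ℤ) (h : Even (m - n)) :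
    ((-1 : k) ^ m.natAbs) = (-1 : k) ^ n.natAbs := by
  rw [dg7_sign_cast, dg7_sign_cast, show m = n + (m - n) by ring,
    zpow_add₀ (by norm_num : (-1 : k) ≠ 0), h.neg_one_zpow, mul_one]

lemma dg7_swap (k : Type*) [Field k] (D : Type*) [Ring D] [Algebra k D]
    (𝒜 : ℤ → Submodule k D) [GradedAlgebra 𝒜]
    (σ : D ⊗[k] D →ₗ[k] D ⊗[k] D)
    (hσ : ∀ (i j : ℤ) (x y : D), x ∈ 𝒜 i → y ∈ 𝒜 j →
      σ (x ⊗ₜ[k] y) = ((-1 : k) ^ (i * j).natAbs) • (y ⊗ₜ[k] x))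
    (a N : ℤ) (x : D) (hx : x ∈ 𝒜 a) (w : D ⊗[k] D)
    (hw : w ∈ Submodule.span k {w : D ⊗[k] D | ∃ r s : ℤ, r + s = N ∧
        ∃ u ∈ 𝒜 r, ∃ v ∈ 𝒜 s, w = u ⊗ₜ[k] v}) :
    LinearMap.mul' k D (σ (LinearMap.rTensor D (LinearMap.mulLeft k x) w)) =
      ((-1 : k) ^ (a * N).natAbs) •
        LinearMap.mul' k D (σ (LinearMap.lTensor D (LinearMap.mulRight k x) w)) := by
  induction hw using Submodule.span_induction with
  | mem w hw =>
      obtain ⟨r, s, hrs, u, hu, v, hv, rfl⟩ := hw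
      rw [LinearMap.rTensor_tmul, LinearMap.lTensor_tmul]
      simp only [LinearMap.mulLeft_apply, LinearMap.mulRight_apply]
      rw [hσ (a + r) s (x * u) v (SetLike.mul_mem_graded hx hu) hv,
          hσ r (s + a) u (v * x) hu (SetLike.mul_mem_graded hv hx),
          map_smul, map_smul, LinearMap.mul'_apply, LinearMap.mul'_apply,
          smul_smul, dg7_sign_mul, mul_assoc]
      subst hrs
      exact congrArg₂ _ (dg7_sign_congr k _ _ ⟨-(a * r), by ring⟩) rfl
  | zero => simp
  | add y z hy hz ihy ihz =>
      rw [map_add, map_add, map_add, map_add, map_add, map_add, ihy, ihz, smul_add]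
  | smul t y hy ih =>
      rw [map_smul, map_smul, map_smul, map_smul, map_smul, map_smul, ih, smul_comm]


variable (k : Type*) [Field k] [CharZero k]
  (D : Type*) [Ring D] [Algebra k D]
  (𝒜 : ℤ → Submodule k D) [GradedAlgebra 𝒜] (d : ℤ)

/-- in a double Gerstenhaber algebra of degree `d`, the
associated bracket `{α,β} = m({{α,β}})` vanishes on graded commutators in its
first argument: `{αβ,γ} - (-1)^{|α||β|}{βα,γ} = 0`. -/
theorem double_gerstenhaber_assoc_bracket_graded_commutators
    (bb : D →ₗ[k] D →ₗ[k] D ⊗[k] D)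
    (σ : D ⊗[k] D →ₗ[k] D ⊗[k] D)
    (hσ : ∀ (i j : ℤ) (x y : D), x ∈ 𝒜 i → y ∈ 𝒜 j →
      σ (x ⊗ₜ[k] y) = ((-1 : k) ^ (i * j).natAbs) • (y ⊗ₜ[k] x))
    (cyc3 : D ⊗[k] (D ⊗[k] D) →ₗ[k] D ⊗[k] (D ⊗[k] D))
    (hcyc3 : ∀ (i j l : ℤ) (x y z : D), x ∈ 𝒜 i → y ∈ 𝒜 j → z ∈ 𝒜 l →
      cyc3 (x ⊗ₜ[k] (y ⊗ₜ[k] z)) =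
        ((-1 : k) ^ ((i + j) * l).natAbs) • (z ⊗ₜ[k] (x ⊗ₜ[k] y)))
    (hdeg : ∀ (i j : ℤ) (x y : D), x ∈ 𝒜 i → y ∈ 𝒜 j →
      bb x y ∈ Submodule.span k {w : D ⊗[k] D | ∃ p q : ℤ, p + q = i + j + d ∧
        ∃ u ∈ 𝒜 p, ∃ v ∈ 𝒜 q, w = u ⊗ₜ[k] v})
    (hleib : ∀ (i j : ℤ) (α β : D), α ∈ 𝒜 i → β ∈ 𝒜 j → ∀ γ : D,
      bb α (β * γ) =
        ((-1 : k) ^ ((i + d) * j).natAbs) •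
            LinearMap.rTensor D (LinearMap.mulLeft k β) (bb α γ)
          + LinearMap.lTensor D (LinearMap.mulRight k γ) (bb α β))
    (hskew : ∀ (i j : ℤ) (α β : D), α ∈ 𝒜 i → β ∈ 𝒜 j →
      bb α β = - ((-1 : k) ^ ((i + d) * (j + d)).natAbs) • σ (bb β α))
    (hjac : ∀ (i j l : ℤ) (α β γ : D), α ∈ 𝒜 i → β ∈ 𝒜 j → γ ∈ 𝒜 l →
      brL k D bb α (bb β γ)
        + ((-1 : k) ^ ((i + d) * (j + l)).natAbs) • cyc3 (brL k D bb β (bb γ α))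
        + ((-1 : k) ^ ((l + d) * (i + j)).natAbs) •
            cyc3 (cyc3 (brL k D bb γ (bb α β))) = 0) :
    ∀ (p q : ℤ) (α β : D), α ∈ 𝒜 p → β ∈ 𝒜 q → ∀ γ : D,
      LinearMap.mul' k D (bb (α * β) γ)
        - ((-1 : k) ^ (p * q).natAbs) • LinearMap.mul' k D (bb (β * α) γ) = 0 := by
  intro p q α β hα hβ
  have key : ∀ (c : ℤ) (γ : D), γ ∈ 𝒜 c →
      LinearMap.mul' k D (bb (α * β) γ)
        - ((-1 : k) ^ (p * q).natAbs) • LinearMap.mul' k D (bb (β * α) γ) = 0 := by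
    intro c γ hγ
    have hαβ : α * β ∈ 𝒜 (p + q) := SetLike.mul_mem_graded hα hβ
    have hβα : β * α ∈ 𝒜 (q + p) := SetLike.mul_mem_graded hβ hα
    rw [hskew (p + q) c (α * β) γ hαβ hγ, hskew (q + p) c (β * α) γ hβα hγ,
        hleib c p γ α hγ hα β, hleib c q γ β hγ hβ α]
    simp only [map_add, map_smul, map_neg, smul_add, smul_smul, neg_smul, smul_neg]
    rw [dg7_swap k D 𝒜 σ hσ p (c + q + d) α hα (bb γ β) (hdeg c q γ β hγ hβ),
        dg7_swap k D 𝒜 σ hσ q (c + p + d) β hβ (bb γ α) (hdeg c p γ α hγ hα)]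
    match_scalars
    · ring_nf
      rw [mul_assoc, dg7_sign_mul, dg7_sign_mul, dg7_sign_mul]
      exact neg_add_eq_zero.mpr (dg7_sign_congr k _ _ ⟨p * d + p * c, by ring⟩)
    · ring_nf
      rw [dg7_sign_mul, dg7_sign_mul, dg7_sign_mul]
      exact neg_add_eq_zero.mpr (dg7_sign_congr k _ _ ⟨-(p * q + q * d + q * c), by ring⟩)
  intro γ
  induction γ using DirectSum.Decomposition.inductionOn (ℳ := 𝒜) with
  | zero => simp
  | homogeneous m => exact key _ m m.2
  | add m m' hm hm' =>
      simp only [map_add, smul_add]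
      rw [← sub_add_sub_comm, hm, hm', add_zero]
end
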